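/- arXiv:2111.13791 — 4 statements merged into one kernel-verified Lean document; each statement's English description precedes it below -/
import Mathlib

section
/- Suppose Hypothesis (H) holds and P(x,M) = 1 for every x ∈ M (so that Z = ∅). Then P admits a unique stationary Borel probability measure μ (i.e. ℒμ = μ), and the support of μ is all of M. -/
open MeasureTheory Filter Topology

noncomputable section

variable {M : Type*}

/-- The iterated transition kernel: `iterP P 0 x = δ_x` (identity kernel), so that
`iterP P 1 = P` and `iterP P (n+1) x A = ∫ iterP P n y A ∂(P x)`. -/
def iterP [MeasurableSpace M] (P : M → Measure M) : ℕ → M → Measure M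
  | 0 => fun x => Measure.dirac x
  | n + 1 => fun x => (P x).bind (iterP P n)

/-- Hypothesis (H) of the paper: `P` is a measurable sub-Markovian kernel; (H1) each
`P x` is absolutely continuous w.r.t. `ρ` and `x ↦ dP(x,·)/dρ` is continuous into `L¹(ρ)`;
(H2) `ρ(M∖Z) > 0` where `Z = {x | P(x,M) = 0}`, and from every non-escaping point every
nonempty open set is reached with positive probability in some positive time. -/
structure HypH [MetricSpace M] [MeasurableSpace M] (P : M → Measure M) (ρ : Measure M) : Prop where
  meas : Measurable P
  subMarkov : ∀ x, P x Set.univ ≤ 1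
  absCont : ∀ x, P x ≪ ρ
  densityCont : ∀ ε : ℝ, 0 < ε → ∃ δ : ℝ, 0 < δ ∧ ∀ x z : M, dist x z < δ →
      (∫⁻ y, ((P x).rnDeriv ρ y - (P z).rnDeriv ρ y)
        + ((P z).rnDeriv ρ y - (P x).rnDeriv ρ y) ∂ρ) < ENNReal.ofReal ε
  rhoPos : 0 < ρ {x | P x Set.univ ≠ 0}
  irred : ∀ x, P x Set.univ ≠ 0 → ∀ A : Set M, IsOpen A → A.Nonempty →
      ∃ n : ℕ, 0 < n ∧ 0 < iterP P n x A

/-!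
Existence is the Krylov–Bogolyubov argument. The L¹-continuity of the densities makes
`x ↦ ∫ f dP(x,·)` continuous for every bounded measurable `f`; for bounded continuous `f` this
makes `ν ↦ νP` weakly continuous, so a weak limit point of the Cesàro averages of `δ_{x₀}Pᵏ`
(which exists because probability measures on a compact space form a compact set) is stationary.

By irreducibility, a nonzero stationary measure charges every nonempty open set. Taking
`f = 1_A` above, `x ↦ P(x,A)` is continuous, so if `λ ≠ 0` is stationary and `λ A = 0`, the open
set `{x | P(x,A) > 0}` is `λ`-null, hence empty. If `μ ≠ ν` are stationary probability measures,
then `μ - ν` and `ν - μ` are nonzero, stationary (since `μ ≤ (μ - ν) + ν` and `P` preserves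
mass) and carried by complementary sets `s` and `sᶜ`, which gives `P(x,sᶜ) = P(x,s) = 0`,
contradicting `P(x,M) = 1`.
-/

open scoped ENNReal NNReal BoundedContinuousFunction

namespace MeasureTheory.Measure

variable {α β : Type*} [MeasurableSpace α] [MeasurableSpace β]

lemma le_sub_add (μ ν : Measure α) [IsFiniteMeasure μ] [IsFiniteMeasure ν] : μ ≤ μ - ν + ν := by
  obtain ⟨s, hs⟩ := exists_isHahnDecomposition μ ν
  calc μ = μ.restrict s + μ.restrict sᶜ := (restrict_add_restrict_compl hs.measurableSet).symm
    _ ≤ ν.restrict s + ((μ - ν).restrict sᶜ + ν.restrict sᶜ) := by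
      rw [restrict_sub_eq_restrict_sub_restrict hs.measurableSet.compl,
        sub_add_cancel_of_le hs.ge_on_compl]
      exact add_le_add hs.le_on le_rfl
    _ = (μ - ν).restrict sᶜ + ν := by
      rw [add_left_comm, restrict_add_restrict_compl hs.measurableSet]
    _ ≤ μ - ν + ν := by gcongr; exact restrict_le_self

lemma eq_of_sub_eq_zero {μ ν : Measure α} [IsProbabilityMeasure μ] [IsProbabilityMeasure ν]
    (h : μ - ν = 0) : μ = ν :=
  eq_of_le_of_measure_univ_eq (by simpa [h] using le_sub_add μ ν) (by simp)

lemma bind_mono_left {f : α → Measure β} (hf : Measurable f) {μ ν : Measure α} (h : μ ≤ ν) :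
    μ.bind f ≤ ν.bind f :=
  le_iff.2 fun s hs => by
    rw [bind_apply hs hf.aemeasurable, bind_apply hs hf.aemeasurable]
    exact lintegral_mono' h le_rfl

lemma add_bind {f : α → Measure β} (hf : Measurable f) (μ ν : Measure α) :
    (μ + ν).bind f = μ.bind f + ν.bind f := by
  ext s hs
  simp only [add_apply, bind_apply hs hf.aemeasurable, lintegral_add_measure]

lemma finsetSum_bind {ι : Type*} {f : α → Measure β} (hf : Measurable f) (s : Finset ι)
    (μ : ι → Measure α) : (∑ i ∈ s, μ i).bind f = ∑ i ∈ s, (μ i).bind f := by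
  ext t ht
  simp only [finsetSum_apply, bind_apply ht hf.aemeasurable, lintegral_finsetSum_measure]

end MeasureTheory.Measure

section RadonNikodym

variable {α : Type*} [MeasurableSpace α]

def rnDerivDist (ρ μ ν : Measure α) : ℝ≥0∞ :=
  ∫⁻ y, (μ.rnDeriv ρ y - ν.rnDeriv ρ y) + (ν.rnDeriv ρ y - μ.rnDeriv ρ y) ∂ρ

lemma rnDerivDist_comm (ρ μ ν : Measure α) : rnDerivDist ρ μ ν = rnDerivDist ρ ν μ := by
  simp only [rnDerivDist, add_comm]

lemma lintegral_le_lintegral_add_mul_rnDerivDist {ρ μ ν : Measure α} [SigmaFinite ρ]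
    [SigmaFinite μ] [SigmaFinite ν] (hμ : μ ≪ ρ) (hν : ν ≪ ρ) {f : α → ℝ≥0∞}
    (hf : Measurable f) {C : ℝ≥0∞} (hfC : ∀ y, f y ≤ C) :
    ∫⁻ y, f y ∂μ ≤ ∫⁻ y, f y ∂ν + C * rnDerivDist ρ μ ν := by
  calc ∫⁻ y, f y ∂μ = ∫⁻ y, μ.rnDeriv ρ y * f y ∂ρ :=
        (lintegral_rnDeriv_mul hμ hf.aemeasurable).symm
    _ ≤ ∫⁻ y, ν.rnDeriv ρ y * f y + C * ((μ.rnDeriv ρ y - ν.rnDeriv ρ y)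
          + (ν.rnDeriv ρ y - μ.rnDeriv ρ y)) ∂ρ := by
      refine lintegral_mono fun y => ?_
      calc μ.rnDeriv ρ y * f y ≤ (ν.rnDeriv ρ y + (μ.rnDeriv ρ y - ν.rnDeriv ρ y)) * f y := by
            gcongr; exact le_add_tsub
        _ ≤ ν.rnDeriv ρ y * f y + C * (μ.rnDeriv ρ y - ν.rnDeriv ρ y) := by
            rw [add_mul, mul_comm C]; gcongr; exact hfC y
        _ ≤ _ := by gcongr; exact le_self_add
    _ = ∫⁻ y, f y ∂ν + C * rnDerivDist ρ μ ν := by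
      rw [lintegral_add_left (show Measurable fun y => ν.rnDeriv ρ y * f y by fun_prop),
        lintegral_const_mul'' _ (by fun_prop), lintegral_rnDeriv_mul hν hf.aemeasurable,
        rnDerivDist]

end RadonNikodym

lemma le_of_tendsto_lintegral_of_le_add_smul {α ι : Type*} [MeasurableSpace α] {l : Filter ι}
    [l.NeBot] {μs νs πs : ι → Measure α} [∀ i, IsProbabilityMeasure (πs i)] {c : ι → ℝ≥0∞}
    (hc : Tendsto c l (𝓝 0)) (hle : ∀ i, μs i ≤ νs i + c i • πs i) {f : α → ℝ≥0∞}
    {C : ℝ≥0∞} (hC : C ≠ ⊤) (hfC : ∀ x, f x ≤ C) {a b : ℝ≥0∞}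
    (ha : Tendsto (fun i => ∫⁻ x, f x ∂μs i) l (𝓝 a))
    (hb : Tendsto (fun i => ∫⁻ x, f x ∂νs i) l (𝓝 b)) : a ≤ b := by
  have hbound : ∀ i, ∫⁻ x, f x ∂μs i ≤ ∫⁻ x, f x ∂νs i + c i * C := fun i => calc
    ∫⁻ x, f x ∂μs i ≤ ∫⁻ x, f x ∂(νs i + c i • πs i) := lintegral_mono' (hle i) le_rfl
    _ = ∫⁻ x, f x ∂νs i + c i * ∫⁻ x, f x ∂πs i := by
      rw [lintegral_add_measure, lintegral_smul_measure, smul_eq_mul]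
    _ ≤ ∫⁻ x, f x ∂νs i + c i * C := by
      gcongr
      exact (lintegral_mono hfC).trans_eq (by simp)
  have hb' : Tendsto (fun i => ∫⁻ x, f x ∂νs i + c i * C) l (𝓝 b) := by
    simpa using hb.add (ENNReal.Tendsto.mul_const hc (Or.inr hC))
  exact le_of_tendsto_of_tendsto' ha hb' hbound

section MarkovKernel

variable [MeasurableSpace M] {P : M → Measure M}

lemma bind_apply_univ (hP : Measurable P) (hfull : ∀ x, P x Set.univ = 1) (μ : Measure M) :
    μ.bind P Set.univ = μ Set.univ := by
  simp [Measure.bind_apply MeasurableSet.univ hP.aemeasurable, hfull]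

lemma isProbabilityMeasure_bind (hP : Measurable P) (hfull : ∀ x, P x Set.univ = 1)
    (μ : Measure M) [IsProbabilityMeasure μ] : IsProbabilityMeasure (μ.bind P) :=
  ⟨by rw [bind_apply_univ hP hfull, measure_univ]⟩

lemma isProbabilityMeasure_iterate_bind (hP : Measurable P) (hfull : ∀ x, P x Set.univ = 1)
    (μ : Measure M) [IsProbabilityMeasure μ] (n : ℕ) :
    IsProbabilityMeasure ((·.bind P)^[n] μ) := by
  induction n with
  | zero => assumption
  | succ n ih =>
    rw [Function.iterate_succ_apply']
    exact isProbabilityMeasure_bind hP hfull _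

lemma birkhoffSum_bind (hP : Measurable P) (μ : Measure M) (n : ℕ) :
    (birkhoffSum (·.bind P) id n μ).bind P = birkhoffSum (·.bind P) id n (μ.bind P) := by
  simp only [birkhoffSum, id, Measure.finsetSum_bind hP]
  refine Finset.sum_congr rfl fun k _ => ?_
  exact (Function.iterate_succ_apply' (·.bind P) k μ).symm.trans
    (Function.iterate_succ_apply (·.bind P) k μ)

def cesaro (P : M → Measure M) (μ : Measure M) (n : ℕ) : Measure M :=
  (n : ℝ≥0∞)⁻¹ • birkhoffSum (·.bind P) id n μ

lemma isProbabilityMeasure_cesaro (hP : Measurable P) (hfull : ∀ x, P x Set.univ = 1)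
    (μ : Measure M) [IsProbabilityMeasure μ] {n : ℕ} (hn : n ≠ 0) :
    IsProbabilityMeasure (cesaro P μ n) := by
  have := isProbabilityMeasure_iterate_bind hP hfull μ
  constructor
  simp [cesaro, birkhoffSum, Measure.finsetSum_apply, ENNReal.inv_mul_cancel, hn]

lemma cesaro_bind_add (hP : Measurable P) (μ : Measure M) (n : ℕ) :
    (cesaro P μ n).bind P + (n : ℝ≥0∞)⁻¹ • μ
      = cesaro P μ n + (n : ℝ≥0∞)⁻¹ • (·.bind P)^[n] μ := by
  have key : (birkhoffSum (·.bind P) id n μ).bind P + μ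
      = birkhoffSum (·.bind P) id n μ + (·.bind P)^[n] μ := by
    rw [birkhoffSum_bind hP, add_comm]
    exact (birkhoffSum_succ' (·.bind P) id n μ).symm.trans (birkhoffSum_succ _ _ n μ)
  simp only [cesaro, Measure.bind_smul, ← smul_add, key]

lemma measurable_iterP (hP : Measurable P) : ∀ n, Measurable (iterP P n)
  | 0 => Measure.measurable_dirac
  | n + 1 => (Measure.measurable_bind' (measurable_iterP hP n)).comp hP

lemma bind_iterP_of_bind_eq (hP : Measurable P) {μ : Measure M} (hμ : μ.bind P = μ) :
    ∀ n, μ.bind (iterP P n) = μ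
  | 0 => Measure.bind_dirac
  | n + 1 => calc
    μ.bind (iterP P (n + 1)) = (μ.bind P).bind (iterP P n) :=
      (Measure.bind_bind hP.aemeasurable (measurable_iterP hP n).aemeasurable).symm
    _ = μ := by rw [hμ, bind_iterP_of_bind_eq hP hμ n]

lemma sub_bind_of_bind_eq (hP : Measurable P) (hfull : ∀ x, P x Set.univ = 1) {μ ν : Measure M}
    [IsFiniteMeasure μ] [IsFiniteMeasure ν] (hμ : μ.bind P = μ) (hν : ν.bind P = ν) :
    (μ - ν).bind P = μ - ν := by
  have hle : μ - ν ≤ (μ - ν).bind P := Measure.sub_le_of_le_add <| calc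
    μ = μ.bind P := hμ.symm
    _ ≤ (μ - ν + ν).bind P := Measure.bind_mono_left hP (Measure.le_sub_add μ ν)
    _ = (μ - ν).bind P + ν := by rw [Measure.add_bind hP, hν]
  exact (Measure.eq_of_le_of_measure_univ_eq hle (bind_apply_univ hP hfull _).symm).symm

end MarkovKernel

namespace HypH

variable [MetricSpace M] [MeasurableSpace M] {ρ : Measure M} {P : M → Measure M}

lemma isFiniteMeasure_apply (hH : HypH P ρ) (x : M) : IsFiniteMeasure (P x) :=
  ⟨(hH.subMarkov x).trans_lt ENNReal.one_lt_top⟩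

lemma tendsto_rnDerivDist (hH : HypH P ρ) (z : M) :
    Tendsto (fun x => rnDerivDist ρ (P x) (P z)) (𝓝 z) (𝓝 0) := by
  refine ENNReal.tendsto_nhds_zero.2 fun ε hε => ?_
  obtain ⟨r, -, hr, hrε⟩ := ENNReal.lt_iff_exists_real_btwn.1 hε
  obtain ⟨δ, hδ, hclose⟩ := hH.densityCont r (ENNReal.ofReal_pos.1 hr)
  filter_upwards [Metric.ball_mem_nhds z hδ] with x hx
  exact ((hclose x z hx).trans hrε).le

lemma continuous_lintegral [SigmaFinite ρ] (hH : HypH P ρ) {f : M → ℝ≥0∞} (hf : Measurable f)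
    {C : ℝ≥0∞} (hC : C ≠ ⊤) (hfC : ∀ y, f y ≤ C) : Continuous fun x => ∫⁻ y, f y ∂P x := by
  have := hH.isFiniteMeasure_apply
  have hbound : ∀ x z, ∫⁻ y, f y ∂P x ≤ ∫⁻ y, f y ∂P z + C * rnDerivDist ρ (P x) (P z) :=
    fun x z => lintegral_le_lintegral_add_mul_rnDerivDist (hH.absCont x) (hH.absCont z) hf hfC
  have hfin : ∀ x, ∫⁻ y, f y ∂P x ≠ ⊤ := fun x => ((lintegral_mono hfC).trans_lt <| by
    rw [lintegral_const]; exact ENNReal.mul_lt_top hC.lt_top (measure_lt_top _ _)).ne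
  refine continuous_iff_continuousAt.2 fun z => (ENNReal.tendsto_nhds (hfin z)).2 fun ε hε => ?_
  have hsmall : ∀ᶠ x in 𝓝 z, C * rnDerivDist ρ (P x) (P z) ≤ ε :=
    ENNReal.tendsto_nhds_zero.1 (by
      simpa using ENNReal.Tendsto.const_mul (hH.tendsto_rnDerivDist z) (Or.inr hC)) ε hε
  filter_upwards [hsmall] with x hx
  refine ⟨tsub_le_iff_right.2 ?_, (hbound x z).trans (by gcongr)⟩
  calc ∫⁻ y, f y ∂P z ≤ ∫⁻ y, f y ∂P x + C * rnDerivDist ρ (P z) (P x) := hbound z x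
    _ ≤ ∫⁻ y, f y ∂P x + ε := by rw [rnDerivDist_comm]; gcongr

lemma continuous_apply [SigmaFinite ρ] [OpensMeasurableSpace M] (hH : HypH P ρ) {A : Set M}
    (hA : MeasurableSet A) : Continuous fun x => P x A := by
  have := hH.continuous_lintegral (f := A.indicator 1) (measurable_one.indicator hA)
    ENNReal.one_ne_top fun y => by by_cases hy : y ∈ A <;> simp [hy]
  simpa only [lintegral_indicator_one hA] using this

lemma exists_boundedContinuous_lintegral [CompactSpace M] [OpensMeasurableSpace M]
    [SigmaFinite ρ] (hH : HypH P ρ) (f : M →ᵇ ℝ≥0) :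
    ∃ g : M →ᵇ ℝ≥0, ∀ x, (g x : ℝ≥0∞) = ∫⁻ y, f y ∂P x := by
  have hfin : ∀ x, ∫⁻ y, f y ∂P x ≠ ⊤ := fun x =>
    have := hH.isFiniteMeasure_apply x
    (BoundedContinuousFunction.lintegral_lt_top_of_nnreal (P x) f).ne
  have hcont := hH.continuous_lintegral f.measurable_coe_ennreal_comp ENNReal.coe_ne_top
    fun y => ENNReal.coe_le_coe.2 (f.apply_le_nndist_zero y)
  exact ⟨.mkOfCompact ⟨fun x => (∫⁻ y, f y ∂P x).toNNReal,
    ENNReal.continuousOn_toNNReal.comp_continuous hcont hfin⟩,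
    fun x => ENNReal.coe_toNNReal (hfin x)⟩

lemma tendsto_lintegral_bind [CompactSpace M] [OpensMeasurableSpace M] [SigmaFinite ρ]
    (hH : HypH P ρ) {ι : Type*} {l : Filter ι} {νs : ι → ProbabilityMeasure M}
    {ν : ProbabilityMeasure M} (h : Tendsto νs l (𝓝 ν)) (f : M →ᵇ ℝ≥0) :
    Tendsto (fun i => ∫⁻ y, f y ∂(νs i : Measure M).bind P) l
      (𝓝 (∫⁻ y, f y ∂(ν : Measure M).bind P)) := by
  obtain ⟨g, hg⟩ := hH.exists_boundedContinuous_lintegral f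
  simp only [Measure.lintegral_bind hH.meas.aemeasurable
    f.measurable_coe_ennreal_comp.aemeasurable, ← hg]
  exact ProbabilityMeasure.tendsto_iff_forall_lintegral_tendsto.1 h g

lemma measure_pos_of_isOpen [OpensMeasurableSpace M] (hH : HypH P ρ)
    (hpos : ∀ x, P x Set.univ ≠ 0) {μ : Measure M} (hμ : μ.bind P = μ) (hμ0 : μ ≠ 0)
    {U : Set M} (hU : IsOpen U) (hne : U.Nonempty) : 0 < μ U := by
  refine pos_iff_ne_zero.2 fun hU0 => ?_
  have hnull : ∀ n, ∀ᵐ x ∂μ, iterP P n x U = 0 := fun n => by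
    have hmeas := measurable_iterP hH.meas n
    refine (lintegral_eq_zero_iff (f := fun x => iterP P n x U)
      ((Measure.measurable_coe hU.measurableSet).comp hmeas)).1 ?_
    rw [← Measure.bind_apply hU.measurableSet hmeas.aemeasurable,
      bind_iterP_of_bind_eq hH.meas hμ, hU0]
  have : (ae μ).NeBot := ae_neBot.2 hμ0
  obtain ⟨x, hx⟩ := (ae_all_iff.2 hnull).exists
  obtain ⟨n, -, hn⟩ := hH.irred x (hpos x) U hU hne
  exact hn.ne' (hx n)

lemma apply_eq_zero_of_bind_eq [SigmaFinite ρ] [OpensMeasurableSpace M] (hH : HypH P ρ)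
    (hpos : ∀ x, P x Set.univ ≠ 0) {μ : Measure M} (hμ : μ.bind P = μ) (hμ0 : μ ≠ 0)
    {A : Set M} (hA : MeasurableSet A) (hμA : μ A = 0) (x : M) : P x A = 0 := by
  have hae : ∀ᵐ y ∂μ, P y A = 0 := by
    refine (lintegral_eq_zero_iff (f := fun y => P y A)
      ((Measure.measurable_coe hA).comp hH.meas)).1 ?_
    rw [← Measure.bind_apply hA hH.meas.aemeasurable, hμ, hμA]
  by_contra hx
  have hopen : IsOpen {y | P y A ≠ 0} := isOpen_ne_fun (hH.continuous_apply hA) continuous_const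
  exact (hH.measure_pos_of_isOpen hpos hμ hμ0 hopen ⟨x, hx⟩).ne' (ae_iff.1 hae)

lemma eq_of_bind_eq [SigmaFinite ρ] [OpensMeasurableSpace M] (hH : HypH P ρ)
    (hfull : ∀ x, P x Set.univ = 1) {μ ν : Measure M} [IsProbabilityMeasure μ]
    [IsProbabilityMeasure ν] (hμ : μ.bind P = μ) (hν : ν.bind P = ν) : μ = ν := by
  by_contra hne
  have hpos : ∀ x, P x Set.univ ≠ 0 := by simp [hfull]
  obtain ⟨s, hs, hμν, hνμ⟩ := Measure.mutually_singular_measure_sub (μ := μ) (ν := ν)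
  obtain ⟨x⟩ := nonempty_of_isProbabilityMeasure μ
  have hs0 := hH.apply_eq_zero_of_bind_eq hpos (sub_bind_of_bind_eq hH.meas hfull hν hμ)
    (mt Measure.eq_of_sub_eq_zero (Ne.symm hne)) hs.compl hνμ x
  have hsc0 := hH.apply_eq_zero_of_bind_eq hpos (sub_bind_of_bind_eq hH.meas hfull hμ hν)
    (mt Measure.eq_of_sub_eq_zero hne) hs hμν x
  simpa [hs0, hsc0, hfull] using measure_add_measure_compl (μ := P x) hs

lemma exists_bind_eq [CompactSpace M] [BorelSpace M] [SigmaFinite ρ] [Nonempty M]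
    (hH : HypH P ρ) (hfull : ∀ x, P x Set.univ = 1) :
    ∃ μ : Measure M, IsProbabilityMeasure μ ∧ μ.bind P = μ := by
  obtain ⟨x₀⟩ := ‹Nonempty M›
  have := isProbabilityMeasure_iterate_bind hH.meas hfull (Measure.dirac x₀)
  let u : ℕ → ProbabilityMeasure M := fun n =>
    ⟨cesaro P (Measure.dirac x₀) (n + 1),
      isProbabilityMeasure_cesaro hH.meas hfull _ n.succ_ne_zero⟩
  obtain ⟨μ, -, φ, hφ, hlim⟩ := isCompact_univ.tendsto_subseq fun n => Set.mem_univ (u n)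
  have := isProbabilityMeasure_bind hH.meas hfull (μ : Measure M)
  refine ⟨μ, inferInstance, ext_of_forall_lintegral_eq_of_IsFiniteMeasure fun f => ?_⟩
  have hc : Tendsto (fun j => ((φ j + 1 : ℕ) : ℝ≥0∞)⁻¹) atTop (𝓝 0) :=
    ENNReal.tendsto_inv_nat_nhds_zero.comp
      ((tendsto_add_atTop_nat 1).comp hφ.tendsto_atTop)
  have hfC : ∀ y, (f y : ℝ≥0∞) ≤ nndist 0 f := fun y =>
    ENNReal.coe_le_coe.2 (f.apply_le_nndist_zero y)
  have hu := ProbabilityMeasure.tendsto_iff_forall_lintegral_tendsto.1 hlim f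
  have hPu := hH.tendsto_lintegral_bind hlim f
  exact le_antisymm
    (le_of_tendsto_lintegral_of_le_add_smul hc
      (fun j => (Measure.le_add_right le_rfl).trans_eq (cesaro_bind_add hH.meas _ _))
      ENNReal.coe_ne_top hfC hPu hu)
    (le_of_tendsto_lintegral_of_le_add_smul hc
      (fun j => (Measure.le_add_right le_rfl).trans_eq (cesaro_bind_add hH.meas _ _).symm)
      ENNReal.coe_ne_top hfC hu hPu)

end HypH

/-- **Theorem A (a).** Under Hypothesis (H), if `P(x,M) = 1` for every `x ∈ M`, then `P`
admits a unique stationary Borel probability measure `μ` (`ℒμ = μ`), and `supp μ = M`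
(every nonempty open set has positive `μ`-measure). -/
theorem stationary_exists_unique_of_hypH
    [MetricSpace M] [CompactSpace M] [MeasurableSpace M] [BorelSpace M]
    (ρ : Measure M) [IsFiniteMeasure ρ] (P : M → Measure M)
    (hH : HypH P ρ) (hfull : ∀ x, P x Set.univ = 1) :
    ∃ μ : Measure M, (IsProbabilityMeasure μ ∧ μ.bind P = μ) ∧
      (∀ U : Set M, IsOpen U → U.Nonempty → 0 < μ U) ∧
      (∀ μ' : Measure M, IsProbabilityMeasure μ' → μ'.bind P = μ' → μ' = μ) := by
  obtain ⟨x, -⟩ := nonempty_of_measure_ne_zero hH.rhoPos.ne'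
  have : Nonempty M := ⟨x⟩
  obtain ⟨μ, hμ, hμP⟩ := hH.exists_bind_eq hfull
  have hpos : ∀ x, P x Set.univ ≠ 0 := by simp [hfull]
  exact ⟨μ, ⟨hμ, hμP⟩,
    fun U hU hne => hH.measure_pos_of_isOpen hpos hμP (IsProbabilityMeasure.ne_zero μ) hU hne,
    fun μ' _ hμ'P => hH.eq_of_bind_eq hfull hμ'P hμP⟩
end
end

section
/- Suppose Hypothesis (H1) holds. Then for every bounded Borel measurable function f : M → ℝ, the function 𝒫f defined by 𝒫f(x) = ∫_M f(y) P(x,dy) is continuous on M; the operator 𝒫 is positive (f ≥ 0 implies 𝒫f ≥ 0); and the restriction of 𝒫 to (C(M),‖·‖_∞) is a compact linear operator. -/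
/-!
By (H1) every `P x` has a density `g x` with respect to `ρ`, so for `|f| ≤ C` we get
`|𝒫f x - 𝒫f z| ≤ C ‖g x - g z‖_{L¹(ρ)}`. As `x ↦ g x` is uniformly continuous into `L¹(ρ)`,
the functions `𝒫f` with `|f| ≤ C` form a uniformly equicontinuous family, bounded by `C` since
`P` is sub-Markovian. Taking a single `f` gives continuity of `𝒫f`, and
taking the unit ball of `C(M)` gives compactness of `𝒫` by Arzelà–Ascoli.
-/

open MeasureTheory Filter Topology

noncomputable section

variable {M : Type*}

/-- Hypothesis (H1) of the paper: `P` is a measurable sub-Markovian kernel, each `P x` is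
absolutely continuous w.r.t. `ρ`, and `x ↦ dP(x,·)/dρ` is continuous from `M` into
`L¹(ρ)`. -/
structure HypH1 [MetricSpace M] [MeasurableSpace M] (P : M → Measure M) (ρ : Measure M) : Prop where
  meas : Measurable P
  subMarkov : ∀ x, P x Set.univ ≤ 1
  absCont : ∀ x, P x ≪ ρ
  densityCont : ∀ ε : ℝ, 0 < ε → ∃ δ : ℝ, 0 < δ ∧ ∀ x z : M, dist x z < δ →
      (∫⁻ y, ((P x).rnDeriv ρ y - (P z).rnDeriv ρ y)
        + ((P z).rnDeriv ρ y - (P x).rnDeriv ρ y) ∂ρ) < ENNReal.ofReal ε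

open scoped ENNReal

theorem ENNReal.toReal_tsub_add_tsub {a b : ℝ≥0∞} (ha : a ≠ ∞) (hb : b ≠ ∞) :
    ((a - b) + (b - a)).toReal = |a.toReal - b.toReal| := by
  rcases le_total a b with hab | hba
  · rw [tsub_eq_zero_of_le hab, zero_add, ENNReal.toReal_sub_of_le hab hb, abs_sub_comm,
      abs_of_nonneg (sub_nonneg.2 (ENNReal.toReal_mono hb hab))]
  · rw [tsub_eq_zero_of_le hba, add_zero, ENNReal.toReal_sub_of_le hba ha,
      abs_of_nonneg (sub_nonneg.2 (ENNReal.toReal_mono ha hba))]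

section

variable {α : Type*} [MeasurableSpace α] {μ ν ρ : Measure α}

theorem integral_abs_toReal_sub_toReal {g h : α → ℝ≥0∞} (hgm : AEMeasurable g ρ)
    (hhm : AEMeasurable h ρ) (hg : ∀ᵐ y ∂ρ, g y < ∞) (hh : ∀ᵐ y ∂ρ, h y < ∞) :
    ∫ y, |(g y).toReal - (h y).toReal| ∂ρ = (∫⁻ y, (g y - h y) + (h y - g y) ∂ρ).toReal := by
  rw [← integral_toReal (f := fun y => g y - h y + (h y - g y)) ((hgm.sub hhm).add (hhm.sub hgm))]
  · refine integral_congr_ae ?_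
    filter_upwards [hg, hh] with y hgy hhy
    exact (ENNReal.toReal_tsub_add_tsub hgy.ne hhy.ne).symm
  · filter_upwards [hg, hh] with y hgy hhy
    exact ENNReal.add_lt_top.2 ⟨tsub_le_self.trans_lt hgy, tsub_le_self.trans_lt hhy⟩

-- `(a - b) + (b - a)` is `|a - b|` in `ℝ≥0∞`: one of the truncated differences vanishes.
def rnDerivL1Dist (ρ μ ν : Measure α) : ℝ≥0∞ :=
  ∫⁻ y, (μ.rnDeriv ρ y - ν.rnDeriv ρ y) + (ν.rnDeriv ρ y - μ.rnDeriv ρ y) ∂ρ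

theorem abs_integral_sub_integral_le_mul_rnDerivL1Dist [IsFiniteMeasure μ] [IsFiniteMeasure ν]
    [SigmaFinite ρ] (hμ : μ ≪ ρ) (hν : ν ≪ ρ) {f : α → ℝ} (hf : AEStronglyMeasurable f ρ)
    {C : ℝ} (hC : ∀ y, |f y| ≤ C) :
    |∫ y, f y ∂μ - ∫ y, f y ∂ν| ≤ C * (rnDerivL1Dist ρ μ ν).toReal := by
  set gμ := fun y => (μ.rnDeriv ρ y).toReal
  set gν := fun y => (ν.rnDeriv ρ y).toReal
  have hfC : ∀ᵐ y ∂ρ, ‖f y‖ ≤ C := ae_of_all _ hC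
  have hμf : Integrable (fun y => f y * gμ y) ρ := Measure.integrable_toReal_rnDeriv.bdd_mul hf hfC
  have hνf : Integrable (fun y => f y * gν y) ρ := Measure.integrable_toReal_rnDeriv.bdd_mul hf hfC
  have hdiff : ∫ y, f y ∂μ - ∫ y, f y ∂ν = ∫ y, f y * (gμ y - gν y) ∂ρ := by
    simp_rw [← integral_toReal_rnDeriv_mul hμ, ← integral_toReal_rnDeriv_mul hν, mul_sub,
      mul_comm (f _)]
    exact (integral_sub (by simpa only [mul_comm] using hμf)
      (by simpa only [mul_comm] using hνf)).symm
  have hL1 : ∫ y, |gμ y - gν y| ∂ρ = (rnDerivL1Dist ρ μ ν).toReal :=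
    integral_abs_toReal_sub_toReal (μ.measurable_rnDeriv ρ).aemeasurable
      (ν.measurable_rnDeriv ρ).aemeasurable (μ.rnDeriv_lt_top ρ) (ν.rnDeriv_lt_top ρ)
  calc |∫ y, f y ∂μ - ∫ y, f y ∂ν| = ‖∫ y, f y * (gμ y - gν y) ∂ρ‖ := by
        rw [hdiff, Real.norm_eq_abs]
    _ ≤ ∫ y, C * |gμ y - gν y| ∂ρ := by
      refine norm_integral_le_of_norm_le
        ((Measure.integrable_toReal_rnDeriv.sub Measure.integrable_toReal_rnDeriv).abs.const_mul C)
        (ae_of_all _ fun y => ?_)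
      rw [norm_mul, Real.norm_eq_abs, Real.norm_eq_abs]
      exact mul_le_mul_of_nonneg_right (hC y) (abs_nonneg _)
    _ = C * (rnDerivL1Dist ρ μ ν).toReal := by rw [integral_const_mul, hL1]

end

theorem ContinuousMap.isCompact_closure_range_of_equicontinuous {X β ι : Type*}
    [TopologicalSpace X] [CompactSpace X] [MetricSpace β] {s : Set β} (hs : IsCompact s)
    (F : ι → C(X, β)) (hF : ∀ i x, F i x ∈ s) (H : Equicontinuous fun i => ⇑(F i)) :
    IsCompact (closure (Set.range F)) := by
  let e := ContinuousMap.isometryEquivBoundedOfCompact X β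
  have hcpt : IsCompact (closure (Set.range (e ∘ F))) := by
    refine BoundedContinuousFunction.arzela_ascoli s hs _ ?_ ?_
    · rintro _ x ⟨i, rfl⟩
      exact hF i x
    · intro x₀
      simp only [EquicontinuousAt, Set.forall_subtype_range_iff]
      exact H x₀
  have := (e.toHomeomorph.isCompact_preimage).2 hcpt
  rwa [Homeomorph.preimage_closure, IsometryEquiv.coe_toHomeomorph, Set.range_comp,
    Set.preimage_image_eq _ e.injective] at this

namespace HypH1

variable [MetricSpace M] [MeasurableSpace M] {P : M → Measure M} {ρ : Measure M}

theorem isFiniteMeasure (hH1 : HypH1 P ρ) (x : M) : IsFiniteMeasure (P x) :=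
  ⟨(hH1.subMarkov x).trans_lt ENNReal.one_lt_top⟩

theorem uniformEquicontinuous_integral [SigmaFinite ρ] (hH1 : HypH1 P ρ) {ι : Type*}
    {F : ι → M → ℝ} (hF : ∀ i, AEStronglyMeasurable (F i) ρ) {C : ℝ} (hC : ∀ i y, |F i y| ≤ C) :
    UniformEquicontinuous fun i x => ∫ y, F i y ∂(P x) := by
  have := hH1.isFiniteMeasure
  refine Metric.uniformEquicontinuous_iff.2 fun ε hε => ?_
  obtain ⟨δ, hδ, hclose⟩ := hH1.densityCont (ε / (|C| + 1)) (by positivity)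
  refine ⟨δ, hδ, fun x z hxz i => ?_⟩
  set d := (rnDerivL1Dist ρ (P x) (P z)).toReal
  have hd : (|C| + 1) * d < ε := (lt_div_iff₀' (by positivity)).1
    (ENNReal.toReal_lt_of_lt_ofReal (hclose x z hxz))
  have hCd : C * d ≤ |C| * d := mul_le_mul_of_nonneg_right (le_abs_self C) ENNReal.toReal_nonneg
  calc dist (∫ y, F i y ∂(P x)) (∫ y, F i y ∂(P z))
      ≤ C * d := abs_integral_sub_integral_le_mul_rnDerivL1Dist
        (hH1.absCont x) (hH1.absCont z) (hF i) (hC i)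
    _ < ε := by linarith [ENNReal.toReal_nonneg (a := rnDerivL1Dist ρ (P x) (P z))]

theorem continuous_integral [SigmaFinite ρ] (hH1 : HypH1 P ρ) {f : M → ℝ}
    (hf : AEStronglyMeasurable f ρ) {C : ℝ} (hC : ∀ y, |f y| ≤ C) :
    Continuous fun x => ∫ y, f y ∂(P x) :=
  (hH1.uniformEquicontinuous_integral (F := fun _ : Unit => f) (fun _ => hf) fun _ => hC)
    |>.equicontinuous.continuous ()

theorem norm_integral_le (hH1 : HypH1 P ρ) [CompactSpace M] (f : C(M, ℝ)) (x : M) :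
    ‖∫ y, f y ∂(P x)‖ ≤ ‖f‖ := by
  have := hH1.isFiniteMeasure x
  calc ‖∫ y, f y ∂(P x)‖ ≤ ‖f‖ * (P x).real Set.univ :=
        norm_integral_le_of_norm_le_const (ae_of_all _ f.norm_coe_le_norm)
    _ ≤ ‖f‖ := mul_le_of_le_one_right (norm_nonneg f)
        (ENNReal.toReal_le_of_le_ofReal zero_le_one (by simpa using hH1.subMarkov x))

variable [BorelSpace M]

def koopman [SigmaFinite ρ] [CompactSpace M] (hH1 : HypH1 P ρ) : C(M, ℝ) →L[ℝ] C(M, ℝ) :=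
  have := hH1.isFiniteMeasure
  have hint (f : C(M, ℝ)) (x : M) : Integrable f (P x) :=
    Integrable.of_bound f.continuous.aestronglyMeasurable ‖f‖ (ae_of_all _ f.norm_coe_le_norm)
  LinearMap.mkContinuous
    { toFun f := ⟨fun x => ∫ y, f y ∂(P x), hH1.continuous_integral
        f.continuous.aestronglyMeasurable (by simpa using f.norm_coe_le_norm)⟩
      map_add' f g := ContinuousMap.ext fun x => integral_add (hint f x) (hint g x)
      map_smul' c f := ContinuousMap.ext fun x => integral_smul c _ }
    1 fun f => by
      rw [one_mul, ContinuousMap.norm_le _ (norm_nonneg f)]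
      exact hH1.norm_integral_le f

theorem isCompactOperator_koopman [SigmaFinite ρ] [CompactSpace M] (hH1 : HypH1 P ρ) :
    IsCompactOperator hH1.koopman := by
  refine (isCompactOperator_iff_isCompact_closure_image_closedBall
    (hH1.koopman : C(M, ℝ) →ₗ[ℝ] C(M, ℝ)) one_pos).2 ?_
  rw [Set.image_eq_range]
  refine ContinuousMap.isCompact_closure_range_of_equicontinuous (isCompact_closedBall 0 1) _
    (fun f x => ?_) ?_
  · exact mem_closedBall_zero_iff.2
      ((hH1.norm_integral_le f x).trans (mem_closedBall_zero_iff.1 f.2))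
  · have hball (f : Metric.closedBall (0 : C(M, ℝ)) 1) (y : M) : |(f : C(M, ℝ)) y| ≤ 1 :=
      (f.1.norm_coe_le_norm y).trans (mem_closedBall_zero_iff.1 f.2)
    exact (hH1.uniformEquicontinuous_integral
      (fun f : Metric.closedBall (0 : C(M, ℝ)) 1 => f.1.continuous.aestronglyMeasurable)
      hball).equicontinuous

end HypH1

/-- **Proposition (regularity of the Koopman operator).** Under Hypothesis (H1): for every
bounded Borel `f : M → ℝ`, the function `𝒫f : x ↦ ∫ f dP(x,·)` is continuous; `𝒫` is
positive; and the restriction of `𝒫` to `(C(M), ‖·‖_∞)` is a compact linear operator. -/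
theorem koopman_regularity_of_hypH1
    [MetricSpace M] [CompactSpace M] [MeasurableSpace M] [BorelSpace M]
    (ρ : Measure M) [IsFiniteMeasure ρ] (P : M → Measure M) (hH1 : HypH1 P ρ) :
    (∀ f : M → ℝ, Measurable f → (∃ C : ℝ, ∀ y, |f y| ≤ C) →
      Continuous fun x => ∫ y, f y ∂(P x)) ∧
    (∀ f : M → ℝ, Measurable f → (∃ C : ℝ, ∀ y, |f y| ≤ C) → (∀ y, 0 ≤ f y) →
      ∀ x, 0 ≤ ∫ y, f y ∂(P x)) ∧
    ∃ T : C(M, ℝ) →L[ℝ] C(M, ℝ),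
      (∀ (f : C(M, ℝ)) (x : M), T f x = ∫ y, f y ∂(P x)) ∧ IsCompactOperator ⇑T := by
  refine ⟨fun f hf ⟨C, hC⟩ => hH1.continuous_integral hf.aestronglyMeasurable hC,
    fun f _ _ hf x => integral_nonneg hf,
    hH1.koopman, fun f x => rfl, hH1.isCompactOperator_koopman⟩
end
end

section
/- Suppose Hypothesis (H1) holds. If (A_i)_{i∈ℕ} is a sequence of Borel subsets of M such that 𝟙_{A_i} → 0 ρ-almost everywhere as i → ∞, then sup_{x∈M} P(x,A_i) → 0 as i → ∞. -/
open MeasureTheory Filter Topology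

noncomputable section

variable {M : Type*}

/-- **Proposition (uniform smallness).** Under Hypothesis (H1), if `(A i)` are Borel sets
with `𝟙_{A_i} → 0` `ρ`-a.e., then `sup_{x ∈ M} P(x, A_i) → 0` as `i → ∞`. -/
theorem sup_kernel_tendsto_zero_of_indicator_tendsto_zero
    [MetricSpace M] [CompactSpace M] [MeasurableSpace M] [BorelSpace M]
    (ρ : Measure M) [IsFiniteMeasure ρ] (P : M → Measure M) (hH1 : HypH1 P ρ)
    (A : ℕ → Set M) (hA : ∀ i, MeasurableSet (A i))
    (hA0 : ∀ᵐ y ∂ρ, Tendsto (fun i : ℕ => (A i).indicator (fun _ => (1 : ℝ)) y) atTop (𝓝 0)) :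
    Tendsto (fun i : ℕ => ⨆ x : M, P x (A i)) atTop (𝓝 0) := by
  have hfin : ∀ x : M, IsFiniteMeasure (P x) := fun x =>
    ⟨lt_of_le_of_lt (hH1.subMarkov x) ENNReal.one_lt_top⟩
  -- representation of P x B as an integral of the density
  have hrep : ∀ (x : M) (B : Set M), MeasurableSet B →
      P x B = ∫⁻ y in B, (P x).rnDeriv ρ y ∂ρ := by
    intro x B hB
    haveI := hfin x
    conv_lhs => rw [← Measure.withDensity_rnDeriv_eq (P x) ρ (hH1.absCont x)]
    rw [withDensity_apply _ hB]
  -- pointwise convergence P z (A i) → 0 for each z, by dominated convergence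
  have key : ∀ z : M, Tendsto (fun i => P z (A i)) atTop (𝓝 0) := by
    intro z
    haveI := hfin z
    have hmeas : ∀ i : ℕ, Measurable fun y => (A i).indicator ((P z).rnDeriv ρ) y :=
      fun i => (Measure.measurable_rnDeriv (P z) ρ).indicator (hA i)
    have hdom : ∀ i : ℕ, (fun y => (A i).indicator ((P z).rnDeriv ρ) y)
        ≤ᶠ[ae ρ] (P z).rnDeriv ρ := by
      intro i
      filter_upwards with y
      exact Set.indicator_le_self _ _ y
    have hbound : ∫⁻ y, (P z).rnDeriv ρ y ∂ρ ≠ ⊤ := by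
      rw [← setLIntegral_univ, ← hrep z Set.univ MeasurableSet.univ]
      exact (lt_of_le_of_lt (hH1.subMarkov z) ENNReal.one_lt_top).ne
    have hpt : ∀ᵐ y ∂ρ, Tendsto (fun i => (A i).indicator ((P z).rnDeriv ρ) y)
        atTop (𝓝 0) := by
      filter_upwards [hA0] with y hy
      have hev : ∀ᶠ i in atTop, (A i).indicator ((P z).rnDeriv ρ) y = 0 := by
        filter_upwards [hy (Iio_mem_nhds (by norm_num : (0:ℝ) < 1/2))] with i hi
        have hyA : y ∉ A i := by
          intro hmem
          simp only [Set.mem_preimage, Set.mem_Iio, Set.indicator_of_mem hmem] at hi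
          norm_num at hi
        exact Set.indicator_of_notMem hyA _
      exact Tendsto.congr' (EventuallyEq.symm hev) tendsto_const_nhds
    have := tendsto_lintegral_of_dominated_convergence ((P z).rnDeriv ρ) hmeas hdom hbound
      hpt
    simp only [lintegral_zero] at this
    refine this.congr fun i => ?_
    rw [lintegral_indicator (hA i), ← hrep z (A i) (hA i)]
  -- main argument
  rw [ENNReal.tendsto_atTop_zero]
  intro ε hε
  -- choose a real r with ofReal r + ofReal r ≤ ε
  obtain ⟨r, hr, hrε⟩ : ∃ r : ℝ, 0 < r ∧ ENNReal.ofReal r + ENNReal.ofReal r ≤ ε := by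
    rcases eq_or_ne ε ⊤ with h | h
    · exact ⟨1, one_pos, by simp [h]⟩
    · have h0 : 0 < ε.toReal := ENNReal.toReal_pos hε.ne' h
      refine ⟨ε.toReal / 2, by positivity, ?_⟩
      rw [← ENNReal.ofReal_add (by positivity) (by positivity)]
      rw [add_halves, ENNReal.ofReal_toReal h]
  have hεt : 0 < ε.toReal ∨ ε = ⊤ := by
    rcases eq_or_ne ε ⊤ with h | h
    · exact Or.inr h
    · exact Or.inl (ENNReal.toReal_pos hε.ne' h)
  obtain ⟨δ, hδ, hδε⟩ := hH1.densityCont r hr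
  -- finite subcover of M by δ-balls
  obtain ⟨t, ht⟩ := isCompact_univ.elim_finite_subcover (fun z : M => Metric.ball z δ)
    (fun z => Metric.isOpen_ball) (fun x _ => Set.mem_iUnion.2 ⟨x, Metric.mem_ball_self hδ⟩)
  -- eventually all centers have small measure
  have hev : ∀ᶠ i in atTop, ∀ z ∈ t, P z (A i) ≤ ENNReal.ofReal r := by
    rw [eventually_all_finset]
    intro z _
    exact (key z).eventually_le_const (by simp [ENNReal.ofReal_pos.2 hr])
  rw [eventually_atTop] at hev
  obtain ⟨N, hN⟩ := hev
  refine ⟨N, fun i hi => ?_⟩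
  refine iSup_le fun x => ?_
  obtain ⟨z, hzt, hxz⟩ : ∃ z ∈ t, x ∈ Metric.ball z δ := by
    have := ht (Set.mem_univ x)
    simpa using this
  rw [Metric.mem_ball] at hxz
  calc P x (A i) = ∫⁻ y in A i, (P x).rnDeriv ρ y ∂ρ := hrep x (A i) (hA i)
    _ ≤ ∫⁻ y in A i, ((P z).rnDeriv ρ y + ((P x).rnDeriv ρ y - (P z).rnDeriv ρ y)) ∂ρ :=
        lintegral_mono fun y => le_add_tsub
    _ = (∫⁻ y in A i, (P z).rnDeriv ρ y ∂ρ)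
        + ∫⁻ y in A i, ((P x).rnDeriv ρ y - (P z).rnDeriv ρ y) ∂ρ :=
        lintegral_add_left (Measure.measurable_rnDeriv _ _) _
    _ ≤ P z (A i) + ∫⁻ y, ((P x).rnDeriv ρ y - (P z).rnDeriv ρ y)
        + ((P z).rnDeriv ρ y - (P x).rnDeriv ρ y) ∂ρ := by
        refine add_le_add ?_ ?_
        · rw [hrep z (A i) (hA i)]
        · exact le_trans (setLIntegral_le_lintegral _ _) (lintegral_mono fun y => le_self_add)
    _ ≤ ENNReal.ofReal r + ENNReal.ofReal r :=
        add_le_add (hN i hi z hzt) (hδε x z hxz).le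
    _ ≤ ε := hrε
end
end

section
/- Let m ≥ 1 and let A = [a_{ij}] be a real m×m matrix such that (i) A^m is the identity matrix, (ii) Σ_{j=1}^m a_{ij} ≤ 1 for every row index i, and (iii) a_{ij} ≥ 0 for all i,j. Then A permutes the standard basis of ℝ^m: for every k ∈ {1,…,m} there exists s ∈ {1,…,m} such that A e_k = e_s, where (e_i) denotes the standard basis. -/
/-- **Lemma (nonnegative substochastic roots of the identity are permutations).**
Let `A` be a real `m × m` matrix such that `A^m = Id`, every row sum is at most `1`, and
all entries are nonnegative. Then `A` permutes the standard basis: for every `k` there is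
`s` with `A e_k = e_s`. -/
theorem matrix_pow_eq_one_row_sum_le_one_nonneg_permutes
    (m : ℕ) (hm : 1 ≤ m) (A : Matrix (Fin m) (Fin m) ℝ)
    (hpow : A ^ m = 1)
    (hrow : ∀ i : Fin m, (∑ j : Fin m, A i j) ≤ 1)
    (hnonneg : ∀ i j : Fin m, 0 ≤ A i j) :
    ∀ k : Fin m, ∃ s : Fin m, A.mulVec (Pi.single k 1) = Pi.single s 1 := by
  have key : ∀ n : ℕ, (∀ i j, 0 ≤ (A ^ n) i j) ∧ ∀ i, (∑ j, (A ^ n) i j) ≤ 1 := by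
    intro n
    induction n with
    | zero =>
      constructor
      · intro i j
        by_cases h : i = j <;> simp [Matrix.one_apply, h]
      · intro i
        simp [Matrix.one_apply]
    | succ n ih =>
      constructor
      · intro i j
        rw [pow_succ', Matrix.mul_apply]
        exact Finset.sum_nonneg fun l _ => mul_nonneg (hnonneg i l) (ih.1 l j)
      · intro i
        have h1 : (∑ j, (A ^ (n+1)) i j) = ∑ l, A i l * ∑ j, (A ^ n) l j := by
          simp only [pow_succ', Matrix.mul_apply, Finset.mul_sum]
          rw [Finset.sum_comm]
        rw [h1]
        calc (∑ l, A i l * ∑ j, (A ^ n) l j) ≤ ∑ l, A i l * 1 :=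
              Finset.sum_le_sum fun l _ =>
                mul_le_mul_of_nonneg_left (ih.2 l) (hnonneg i l)
          _ ≤ 1 := by simpa using hrow i
  set B := A ^ (m - 1) with hB
  have hm1 : m - 1 + 1 = m := Nat.succ_pred_eq_of_pos hm
  have hAB : A * B = 1 := by
    rw [hB, ← pow_succ', hm1, hpow]
  have hBA : B * A = 1 := by
    rw [hB, ← pow_succ, hm1, hpow]
  obtain ⟨hBnn, hBrow⟩ := key (m - 1)
  have hBle : ∀ l i, B l i ≤ 1 := fun l i =>
    le_trans (Finset.single_le_sum (fun j _ => hBnn l j) (Finset.mem_univ i)) (hBrow l)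
  -- whenever A i l > 0, row l of B is e_i
  have hstep : ∀ i l, 0 < A i l → (B l i = 1 ∧ ∀ j, j ≠ i → B l j = 0) := by
    intro i l hpos
    have hdiag : ∑ t, A i t * B t i = 1 := by
      have h := congrArg (fun M => M i i) hAB
      simpa [Matrix.mul_apply, Matrix.one_apply] using h
    have hzero : ∀ t, A i t * (1 - B t i) = 0 := by
      have hsum : ∑ t, A i t * (1 - B t i) ≤ 0 := by
        have he : ∑ t, A i t * (1 - B t i) = (∑ t, A i t) - 1 := by
          simp only [mul_sub, mul_one, Finset.sum_sub_distrib, hdiag]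
        rw [he]
        linarith [hrow i]
      have hnn : ∀ t ∈ Finset.univ, (0:ℝ) ≤ A i t * (1 - B t i) := fun t _ =>
        mul_nonneg (hnonneg i t) (by linarith [hBle t i])
      have heq : ∑ t, A i t * (1 - B t i) = 0 :=
        le_antisymm hsum (Finset.sum_nonneg hnn)
      intro t
      exact (Finset.sum_eq_zero_iff_of_nonneg hnn).mp heq t (Finset.mem_univ t)
    constructor
    · have := hzero l
      have h2 : (1 : ℝ) - B l i = 0 := by
        rcases mul_eq_zero.mp this with h | h
        · exact absurd h (ne_of_gt hpos)
        · exact h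
      linarith
    · intro j hj
      have hoff : ∑ t, A i t * B t j = 0 := by
        have h := congrArg (fun M => M i j) hAB
        simpa [Matrix.mul_apply, Matrix.one_apply, hj, (show i ≠ j from fun h' => hj (h'.symm))] using h
      have hnn : ∀ t ∈ Finset.univ, (0:ℝ) ≤ A i t * B t j := fun t _ =>
        mul_nonneg (hnonneg i t) (hBnn t j)
      have := (Finset.sum_eq_zero_iff_of_nonneg hnn).mp hoff l (Finset.mem_univ l)
      rcases mul_eq_zero.mp this with h | h
      · exact absurd h (ne_of_gt hpos)
      · exact h
  intro k
  -- column k of A has a positive entry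
  have hcol : ∃ i, 0 < A i k := by
    by_contra h
    push_neg at h
    have hz : ∀ i, A i k = 0 := fun i => le_antisymm (h i) (hnonneg i k)
    have h1 : (B * A) k k = 1 := by rw [hBA]; simp [Matrix.one_apply]
    rw [Matrix.mul_apply] at h1
    simp [hz] at h1
  obtain ⟨i, hi⟩ := hcol
  obtain ⟨hBki, hBkz⟩ := hstep i k hi
  -- A r k = 0 for r ≠ i
  have hrk : ∀ r, r ≠ i → A r k = 0 := by
    intro r hr
    by_contra hne
    have hpos : 0 < A r k := lt_of_le_of_ne (hnonneg r k) (Ne.symm hne)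
    have := (hstep r k hpos).1
    rw [hBkz r hr] at this
    norm_num at this
  -- A i k = 1
  have hik : A i k = 1 := by
    have h1 : (B * A) k k = 1 := by rw [hBA]; simp [Matrix.one_apply]
    rw [Matrix.mul_apply] at h1
    have h2 : ∑ t, B k t * A t k = B k i * A i k := by
      apply Finset.sum_eq_single
      · intro t _ ht
        rw [hBkz t ht, zero_mul]
      · intro h
        exact absurd (Finset.mem_univ i) h
    rw [h2, hBki, one_mul] at h1
    exact h1
  refine ⟨i, ?_⟩
  funext r
  rw [Matrix.mulVec_single]
  by_cases hr : r = i
  · subst hr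
    simp [hik]
  · simp [hrk r hr, Pi.single_eq_of_ne hr]
end
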